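/- Let f = h + conj(g) be harmonic in the unit disk 𝔻 with positive Jacobian J_f = |h'|² − |g'|² > 0 in 𝔻, and suppose Λ_y((h−g)(𝔻)) = Λ_y(f(𝔻)). If h − g is injective on 𝔻 and (h−g)(𝔻) is the union of two non-disjoint domains each convex in the direction of the real axis, then f is injective on 𝔻 and f(𝔻) is the union of two non-disjoint domains each convex in the direction of the real axis. -/

import Mathlib

open Complex Set Metric

/-- Projection of a planar set onto the imaginary axis. -/
def Py (D : Set ℂ) : Set ℝ := {a : ℝ | ∃ z ∈ D, z.im = a}

/-- `Λ_y(D)`: imaginary parts `a` such that the horizontal slice of `D` at height `a`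
is nonempty and connected. -/
def Ly (D : Set ℂ) : Set ℝ := {a : ℝ | IsConnected (D ∩ {z : ℂ | z.im = a})}

/-- Convexity in the direction of the real axis. -/
def CvxRe (D : Set ℂ) : Prop :=
  ∀ z ∈ D, ∀ w ∈ D, z.im = w.im → segment ℝ z w ⊆ D

/-- Local injectivity of `q` on `S`. -/
def LocInjOn (q : ℂ → ℂ) (S : Set ℂ) : Prop :=
  ∀ z ∈ S, ∃ U ∈ nhdsWithin z S, Set.InjOn q U

/-! Put `φ = h - g` and `Ω = φ(𝔻)`. Since `g + conj g = 2 Re g`, we have `f = F ∘ φ` on `𝔻` for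
the shear `F w = w + 2 Re g(φ⁻¹ w)`, which preserves imaginary parts. Along a horizontal segment in
`Ω` the real part of `F` has derivative `1 + 2 Re (g'/(h' - g')) = (|h'|² - |g'|²)/|h' - g'|² > 0`.
So if `F w = F w'` with `w ≠ w'`, the segment `[w, w']` leaves `Ω` and the slice of `Ω` at height
`Im w` is disconnected. Then `w`, `w'` lie in different pieces `Ωᵢ`, whose convex slices are mapped
by `F` onto connected sets meeting at `F w`, so the slice of `f(𝔻) = F(Ω)` at that height is
connected: this contradicts `Λ_y(Ω) = Λ_y(f(𝔻))`. Hence `F` and `f` are injective, and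
`f(𝔻) = F(Ω₁) ∪ F(Ω₂)`, where each `F(Ωᵢ)` is horizontally convex because a connected subset of a
horizontal line is a segment, and open because `J_f > 0` makes `f` a local homeomorphism. -/

open Filter Function Topology ComplexConjugate

lemma convex_setOf_im_eq (a : ℝ) : Convex ℝ {z : ℂ | z.im = a} :=
  convex_hyperplane (.mk add_im smul_im) a

lemma convex_of_isPreconnected_of_subset_im_eq {S : Set ℂ} {a : ℝ} (hS : IsPreconnected S)
    (hSa : S ⊆ {z | z.im = a}) : Convex ℝ S := by
  have hre : Convex ℝ (re '' S) := (hS.image re continuous_re.continuousOn).ordConnected.convex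
  refine convex_iff_segment_subset.2 fun x hx y hy p hp => ?_
  have hpre : p.re ∈ segment ℝ x.re y.re := by
    simpa using image_segment ℝ reLm.toAffineMap x y ▸ mem_image_of_mem reLm.toAffineMap hp
  obtain ⟨q, hq, hqp⟩ := hre.segment_subset (mem_image_of_mem re hx) (mem_image_of_mem re hy) hpre
  have hpim : p.im = a := (convex_setOf_im_eq a).segment_subset (hSa hx) (hSa hy) hp
  rwa [← Complex.ext hqp ((hSa hq).trans hpim.symm)]

lemma CvxRe.convex_inter_im_eq {Θ : Set ℂ} (hΘ : CvxRe Θ) (a : ℝ) :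
    Convex ℝ (Θ ∩ {z | z.im = a}) :=
  convex_iff_segment_subset.2 fun _ hx _ hy =>
    subset_inter (hΘ _ hx.1 _ hy.1 (hx.2.trans hy.2.symm))
      ((convex_setOf_im_eq a).segment_subset hx.2 hy.2)

lemma CvxRe.image {F : ℂ → ℂ} {Θ : Set ℂ} (hΘ : CvxRe Θ) (hF : ContinuousOn F Θ)
    (hFim : ∀ w, (F w).im = w.im) : CvxRe (F '' Θ) := by
  rintro _ ⟨x, hx, rfl⟩ _ ⟨y, hy, rfl⟩ him
  rw [hFim, hFim] at him
  have hseg := hΘ x hx y hy him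
  have hline : F '' segment ℝ x y ⊆ {z | z.im = x.im} := by
    rintro _ ⟨p, hp, rfl⟩
    exact (hFim p).trans ((convex_setOf_im_eq x.im).segment_subset rfl him.symm hp)
  have hconv := convex_of_isPreconnected_of_subset_im_eq
    ((convex_segment x y).isPreconnected.image F (hF.mono hseg)) hline
  exact (hconv.segment_subset (mem_image_of_mem F (left_mem_segment ℝ x y))
    (mem_image_of_mem F (right_mem_segment ℝ x y))).trans (image_mono hseg)

lemma segment_subset_of_mem_Ly {D : Set ℂ} {a : ℝ} (ha : a ∈ Ly D) {w w' : ℂ} (hw : w ∈ D)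
    (hw' : w' ∈ D) (him : w.im = a) (him' : w'.im = a) : segment ℝ w w' ⊆ D :=
  ((convex_of_isPreconnected_of_subset_im_eq ha.isPreconnected inter_subset_right).segment_subset
    ⟨hw, him⟩ ⟨hw', him'⟩).trans inter_subset_left

lemma image_inter_setOf_im_eq {F : ℂ → ℂ} (hFim : ∀ w, (F w).im = w.im) (X : Set ℂ) (a : ℝ) :
    F '' X ∩ {z | z.im = a} = F '' (X ∩ {z | z.im = a}) := by
  rw [← image_inter_preimage]
  congr! 2
  ext
  simp [hFim]

lemma mem_Ly_image_union {F : ℂ → ℂ} {Θ₁ Θ₂ : Set ℂ} (hΘ₁ : CvxRe Θ₁) (hΘ₂ : CvxRe Θ₂)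
    (hF : ContinuousOn F (Θ₁ ∪ Θ₂)) (hFim : ∀ w, (F w).im = w.im) {w₁ w₂ : ℂ} (hw₁ : w₁ ∈ Θ₁)
    (hw₂ : w₂ ∈ Θ₂) (hFw : F w₁ = F w₂) : w₁.im ∈ Ly (F '' (Θ₁ ∪ Θ₂)) := by
  set L := {z : ℂ | z.im = w₁.im}
  have h₁ : IsPreconnected (F '' (Θ₁ ∩ L)) := (hΘ₁.convex_inter_im_eq _).isPreconnected.image F
    (hF.mono (inter_subset_left.trans subset_union_left))
  have h₂ : IsPreconnected (F '' (Θ₂ ∩ L)) := (hΘ₂.convex_inter_im_eq _).isPreconnected.image F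
    (hF.mono (inter_subset_left.trans subset_union_right))
  have m₁ : F w₁ ∈ F '' (Θ₁ ∩ L) := mem_image_of_mem F ⟨hw₁, rfl⟩
  have m₂ : F w₁ ∈ F '' (Θ₂ ∩ L) :=
    hFw ▸ mem_image_of_mem F ⟨hw₂, show w₂.im = w₁.im by rw [← hFim w₂, ← hFw, hFim]⟩
  show IsConnected (F '' (Θ₁ ∪ Θ₂) ∩ L)
  rw [image_inter_setOf_im_eq hFim, union_inter_distrib_right, image_union]
  exact ⟨⟨_, Or.inl m₁⟩, h₁.union' ⟨_, m₁, m₂⟩ h₂⟩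

theorem injOn_of_Ly_image_subset {F : ℂ → ℂ} {Θ₁ Θ₂ : Set ℂ} (hΘ₁ : CvxRe Θ₁) (hΘ₂ : CvxRe Θ₂)
    (hF : ContinuousOn F (Θ₁ ∪ Θ₂)) (hFim : ∀ w, (F w).im = w.im)
    (hmono : ∀ w w', w.im = w'.im → w.re < w'.re → segment ℝ w w' ⊆ Θ₁ ∪ Θ₂ →
      (F w).re < (F w').re)
    (hLy : Ly (F '' (Θ₁ ∪ Θ₂)) ⊆ Ly (Θ₁ ∪ Θ₂)) : InjOn F (Θ₁ ∪ Θ₂) := by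
  have no_collision : ∀ w ∈ Θ₁ ∪ Θ₂, ∀ w' ∈ Θ₁ ∪ Θ₂, F w = F w' → w.re < w'.re → False := by
    intro w hw w' hw' hFw hre
    have him : w.im = w'.im := by rw [← hFim w, ← hFim w', hFw]
    have hseg : ¬ segment ℝ w w' ⊆ Θ₁ ∪ Θ₂ := fun hseg =>
      (hmono w w' him hre hseg).ne (congrArg re hFw)
    have hLyΩ : w.im ∉ Ly (Θ₁ ∪ Θ₂) := fun ha =>
      hseg (segment_subset_of_mem_Ly ha hw hw' rfl him.symm)
    rcases hw with hw | hw <;> rcases hw' with hw' | hw'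
    · exact hseg ((hΘ₁ w hw w' hw' him).trans subset_union_left)
    · exact hLyΩ (hLy (mem_Ly_image_union hΘ₁ hΘ₂ hF hFim hw hw' hFw))
    · rw [union_comm] at hF hLyΩ hLy
      exact hLyΩ (hLy (mem_Ly_image_union hΘ₂ hΘ₁ hF hFim hw hw' hFw))
    · exact hseg ((hΘ₂ w hw w' hw' him).trans subset_union_right)
  intro w hw w' hw' hFw
  rcases lt_trichotomy w.re w'.re with hlt | heq | hgt
  · exact (no_collision w hw w' hw' hFw hlt).elim
  · exact Complex.ext heq (by rw [← hFim w, ← hFim w', hFw])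
  · exact (no_collision w' hw' w hw hFw.symm hgt).elim

def shear (G : ℂ → ℂ) (w : ℂ) : ℂ := w + 2 * ((G w).re : ℂ)

lemma shear_im (G : ℂ → ℂ) (w : ℂ) : (shear G w).im = w.im := by simp [shear]

lemma shear_re (G : ℂ → ℂ) (w : ℂ) : (shear G w).re = w.re + 2 * (G w).re := by simp [shear]

lemma continuousOn_shear {G : ℂ → ℂ} {Ω : Set ℂ} (hG : ContinuousOn G Ω) :
    ContinuousOn (shear G) Ω := by
  unfold shear
  fun_prop

lemma HasDerivAt.re {u : ℝ → ℂ} {u' : ℂ} {θ : ℝ} (hu : HasDerivAt u u' θ) :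
    HasDerivAt (fun θ => (u θ).re) u'.re θ :=
  reCLM.hasFDerivAt.comp_hasDerivAt θ hu

lemma re_shear_lt_of_segment_subset {G G' : ℂ → ℂ} {Ω : Set ℂ}
    (hG : ∀ w ∈ Ω, HasDerivAt G (G' w) w) (hpos : ∀ w ∈ Ω, 0 < 1 + 2 * (G' w).re)
    {w w' : ℂ} (him : w.im = w'.im) (hre : w.re < w'.re) (hseg : segment ℝ w w' ⊆ Ω) :
    (shear G w).re < (shear G w').re := by
  set γ : ℝ → ℂ := ⇑(AffineMap.lineMap w w' : ℝ →ᵃ[ℝ] ℂ)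
  have hγ : ∀ θ ∈ Icc (0 : ℝ) 1, γ θ ∈ Ω := fun θ hθ =>
    hseg (segment_eq_image_lineMap ℝ w w' ▸ mem_image_of_mem _ hθ)
  have hd : w' - w = ((w'.re - w.re : ℝ) : ℂ) := Complex.ext (by simp) (by simp [him])
  have hderiv : ∀ θ ∈ Icc (0 : ℝ) 1, HasDerivAt (fun θ => (shear G (γ θ)).re)
      ((w'.re - w.re) * (1 + 2 * (G' (γ θ)).re)) θ := by
    intro θ hθ
    have hγ' : HasDerivAt γ (w' - w) θ := AffineMap.hasDerivAt_lineMap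
    have hsum : HasDerivAt (fun θ => (shear G (γ θ)).re)
        ((w' - w).re + 2 * ((w' - w) * G' (γ θ)).re) θ := by
      simp only [shear_re]
      exact hγ'.re.add (((hG _ (hγ θ hθ)).scomp θ hγ').re.const_mul 2)
    refine hsum.congr_deriv ?_
    rw [hd, re_ofReal_mul, ofReal_re]
    ring
  have hmono := strictMonoOn_of_hasDerivWithinAt_pos (convex_Icc 0 1)
    (fun θ hθ => (hderiv θ hθ).continuousAt.continuousWithinAt)
    (fun θ hθ => (hderiv θ (interior_subset hθ)).hasDerivWithinAt)
    (fun θ hθ => mul_pos (sub_pos.2 hre) (hpos _ (hγ θ (interior_subset hθ))))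
  simpa [γ] using hmono (left_mem_Icc.2 zero_le_one) (right_mem_Icc.2 zero_le_one) zero_lt_one

lemma one_add_two_mul_re_mul_inv_sub_pos {A B : ℂ} (hAB : ‖B‖ < ‖A‖) :
    0 < 1 + 2 * (B * (A - B)⁻¹).re := by
  have hne : A - B ≠ 0 := sub_ne_zero.2 fun h => hAB.ne (by rw [h])
  have hsq : normSq B < normSq A := by
    simpa only [normSq_eq_norm_sq] using pow_lt_pow_left₀ hAB (norm_nonneg _) two_ne_zero
  have hpos : 0 < normSq (A - B) := normSq_pos.2 hne
  have key : normSq (A - B) * (1 + 2 * (B * (A - B)⁻¹).re) = normSq A - normSq B := by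
    rw [← div_eq_mul_inv, div_re]
    field_simp
    simp only [normSq_apply, sub_re, sub_im]
    ring
  exact pos_of_mul_pos_right (key ▸ sub_pos.2 hsq) hpos.le

lemma hasStrictDerivAt_invFunOn {𝕜 : Type*} [NontriviallyNormedField 𝕜] [CompleteSpace 𝕜]
    {φ : 𝕜 → 𝕜} {φ' z : 𝕜} {D : Set 𝕜} (hD : D ∈ 𝓝 z) (hinj : InjOn φ D)
    (hφ : HasStrictDerivAt φ φ' z) (hφ' : φ' ≠ 0) :
    HasStrictDerivAt (invFunOn φ D) φ'⁻¹ (φ z) :=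
  hφ.to_local_left_inverse hφ' (eventually_of_mem hD fun _ hx => hinj.leftInvOn_invFunOn hx)

lemma map_nhds_add_conj {h g : ℂ → ℂ} {A B z : ℂ} (hh : HasStrictDerivAt h A z)
    (hg : HasStrictDerivAt g B z) (hAB : ‖B‖ < ‖A‖) :
    map (fun z => h z + conj (g z)) (𝓝 z) = 𝓝 (h z + conj (g z)) := by
  have hL := (hh.hasStrictFDerivAt.restrictScalars ℝ).add
    (conjCLE.hasStrictFDerivAt.comp z (hg.hasStrictFDerivAt.restrictScalars ℝ))
  refine hL.map_nhds_eq_of_surj (LinearMap.range_eq_top.2 (LinearMap.injective_iff_surjective.1 ?_))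
  -- The real derivative `v ↦ A v + conj (B v)` is injective since `|B v| < |A v|` for `v ≠ 0`.
  refine (injective_iff_map_eq_zero _).2 fun v hv => ?_
  replace hv : v * A + conj v * conj B = 0 := by simpa using hv
  have hnorm : ‖v‖ * ‖A‖ = ‖v‖ * ‖B‖ := by
    simpa [norm_mul] using congrArg norm (eq_neg_of_add_eq_zero_left hv)
  by_contra hv0
  exact hAB.ne' (mul_left_cancel₀ (norm_ne_zero_iff.2 hv0) hnorm)

lemma isOpen_image_of_map_nhds_eq {X Y : Type*} [TopologicalSpace X] [TopologicalSpace Y]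
    {f : X → Y} {U : Set X} (hU : IsOpen U) (hf : ∀ x ∈ U, map f (𝓝 x) = 𝓝 (f x)) :
    IsOpen (f '' U) :=
  isOpen_iff_mem_nhds.2 <| forall_mem_image.2 fun x hx => hf x hx ▸ image_mem_map (hU.mem_nhds hx)

lemma sub_add_two_mul_re_eq_add_conj (a b : ℂ) : a - b + 2 * (b.re : ℂ) = a + conj b := by
  rw [re_eq_add_conj]
  ring

section HarmonicShear

variable {h g : ℂ → ℂ} {D : Set ℂ}

lemma shear_comp_invFunOn_sub (hinj : InjOn (fun z => h z - g z) D) {z : ℂ} (hz : z ∈ D) :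
    shear (g ∘ invFunOn (fun z => h z - g z) D) (h z - g z) = h z + conj (g z) := by
  rw [shear, comp_apply, hinj.leftInvOn_invFunOn hz, sub_add_two_mul_re_eq_add_conj]

lemma hasStrictDerivAt_invFunOn_sub (hD : IsOpen D) (hh : DifferentiableOn ℂ h D)
    (hg : DifferentiableOn ℂ g D) (hJ : ∀ z ∈ D, ‖deriv g z‖ < ‖deriv h z‖)
    (hinj : InjOn (fun z => h z - g z) D) {z : ℂ} (hz : z ∈ D) :
    HasStrictDerivAt (invFunOn (fun z => h z - g z) D) (deriv h z - deriv g z)⁻¹ (h z - g z) :=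
  hasStrictDerivAt_invFunOn (hD.mem_nhds hz) hinj
    ((hh.analyticAt (hD.mem_nhds hz)).hasStrictDerivAt.sub
      (hg.analyticAt (hD.mem_nhds hz)).hasStrictDerivAt)
    (sub_ne_zero.2 (ne_of_apply_ne norm (hJ z hz).ne'))

lemma hasDerivAt_comp_invFunOn_sub (hD : IsOpen D) (hh : DifferentiableOn ℂ h D)
    (hg : DifferentiableOn ℂ g D) (hJ : ∀ z ∈ D, ‖deriv g z‖ < ‖deriv h z‖)
    (hinj : InjOn (fun z => h z - g z) D) {z : ℂ} (hz : z ∈ D) :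
    HasDerivAt (g ∘ invFunOn (fun z => h z - g z) D)
      (deriv g z * (deriv h z - deriv g z)⁻¹) (h z - g z) := by
  have hgz : HasDerivAt g (deriv g z) (invFunOn (fun z => h z - g z) D (h z - g z)) := by
    rw [hinj.leftInvOn_invFunOn hz]
    exact (hg.differentiableAt (hD.mem_nhds hz)).hasDerivAt
  exact hgz.comp _ (hasStrictDerivAt_invFunOn_sub hD hh hg hJ hinj hz).hasDerivAt

lemma map_nhds_shear_comp_invFunOn_sub (hD : IsOpen D) (hh : DifferentiableOn ℂ h D)
    (hg : DifferentiableOn ℂ g D) (hJ : ∀ z ∈ D, ‖deriv g z‖ < ‖deriv h z‖)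
    (hinj : InjOn (fun z => h z - g z) D) {z : ℂ} (hz : z ∈ D) :
    map (shear (g ∘ invFunOn (fun z => h z - g z) D)) (𝓝 (h z - g z)) =
      𝓝 (shear (g ∘ invFunOn (fun z => h z - g z) D) (h z - g z)) := by
  have hzD := hD.mem_nhds hz
  have hhz := (hh.analyticAt hzD).hasStrictDerivAt
  have hgz := (hg.analyticAt hzD).hasStrictDerivAt
  have hne : deriv h z - deriv g z ≠ 0 := sub_ne_zero.2 (ne_of_apply_ne norm (hJ z hz).ne')
  have himage : (fun z => h z - g z) '' D ∈ 𝓝 (h z - g z) :=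
    (hhz.sub hgz).map_nhds_eq hne ▸ image_mem_map hzD
  have hF : shear (g ∘ invFunOn (fun z => h z - g z) D) =ᶠ[𝓝 (h z - g z)]
      (fun z => h z + conj (g z)) ∘ invFunOn (fun z => h z - g z) D := by
    filter_upwards [himage]
    rintro _ ⟨x, hx, rfl⟩
    rw [comp_apply, hinj.leftInvOn_invFunOn hx, shear_comp_invFunOn_sub hinj hx]
  rw [map_congr hF, ← map_map,
    (hasStrictDerivAt_invFunOn_sub hD hh hg hJ hinj hz).map_nhds_eq (inv_ne_zero hne),
    hinj.leftInvOn_invFunOn hz, map_nhds_add_conj hhz hgz (hJ z hz),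
    shear_comp_invFunOn_sub hinj hz]

lemma continuousOn_shear_comp_invFunOn_sub (hD : IsOpen D) (hh : DifferentiableOn ℂ h D)
    (hg : DifferentiableOn ℂ g D) (hJ : ∀ z ∈ D, ‖deriv g z‖ < ‖deriv h z‖)
    (hinj : InjOn (fun z => h z - g z) D) :
    ContinuousOn (shear (g ∘ invFunOn (fun z => h z - g z) D)) ((fun z => h z - g z) '' D) :=
  continuousOn_shear <| forall_mem_image.2 fun _ hz =>
    (hasDerivAt_comp_invFunOn_sub hD hh hg hJ hinj hz).continuousAt.continuousWithinAt

lemma re_shear_comp_invFunOn_sub_lt (hD : IsOpen D) (hh : DifferentiableOn ℂ h D)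
    (hg : DifferentiableOn ℂ g D) (hJ : ∀ z ∈ D, ‖deriv g z‖ < ‖deriv h z‖)
    (hinj : InjOn (fun z => h z - g z) D) {w w' : ℂ} (him : w.im = w'.im) (hre : w.re < w'.re)
    (hseg : segment ℝ w w' ⊆ (fun z => h z - g z) '' D) :
    (shear (g ∘ invFunOn (fun z => h z - g z) D) w).re <
      (shear (g ∘ invFunOn (fun z => h z - g z) D) w').re := by
  set ψ := invFunOn (fun z => h z - g z) D
  have hψ : ∀ z ∈ D, ψ (h z - g z) = z := fun _ hz => hinj.leftInvOn_invFunOn hz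
  refine re_shear_lt_of_segment_subset
    (G' := fun w => deriv g (ψ w) * (deriv h (ψ w) - deriv g (ψ w))⁻¹) ?_ ?_ him hre hseg
  all_goals
    refine forall_mem_image.2 fun z hz => ?_
    simp only [hψ z hz]
  · exact hasDerivAt_comp_invFunOn_sub hD hh hg hJ hinj hz
  · exact one_add_two_mul_re_mul_inv_sub_pos (hJ z hz)

end HarmonicShear

theorem shear_generalization_backward
    (h g : ℂ → ℂ)
    (hh : DifferentiableOn ℂ h (ball (0 : ℂ) 1))
    (hg : DifferentiableOn ℂ g (ball (0 : ℂ) 1))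
    (f : ℂ → ℂ) (hf : ∀ z, f z = h z + (starRingEnd ℂ) (g z))
    (hJ : ∀ z ∈ ball (0 : ℂ) 1, ‖deriv g z‖ < ‖deriv h z‖)
    (hLy : Ly ((fun z => h z - g z) '' ball (0 : ℂ) 1) = Ly (f '' ball (0 : ℂ) 1))
    (hinj : Set.InjOn (fun z => h z - g z) (ball (0 : ℂ) 1))
    (hdec : ∃ Ω₁ Ω₂ : Set ℂ, IsOpen Ω₁ ∧ IsConnected Ω₁ ∧ CvxRe Ω₁ ∧
      IsOpen Ω₂ ∧ IsConnected Ω₂ ∧ CvxRe Ω₂ ∧ (Ω₁ ∩ Ω₂).Nonempty ∧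
      (fun z => h z - g z) '' ball (0 : ℂ) 1 = Ω₁ ∪ Ω₂) :
    Set.InjOn f (ball (0 : ℂ) 1) ∧
    ∃ D₁ D₂ : Set ℂ, IsOpen D₁ ∧ IsConnected D₁ ∧ CvxRe D₁ ∧
      IsOpen D₂ ∧ IsConnected D₂ ∧ CvxRe D₂ ∧ (D₁ ∩ D₂).Nonempty ∧
      f '' ball (0 : ℂ) 1 = D₁ ∪ D₂ := by
  obtain ⟨Ω₁, Ω₂, hΩ₁o, hΩ₁c, hΩ₁x, hΩ₂o, hΩ₂c, hΩ₂x, ⟨w₀, hw₀⟩, hΩ⟩ := hdec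
  have hD : IsOpen (ball (0 : ℂ) 1) := isOpen_ball
  set F := shear (g ∘ invFunOn (fun z => h z - g z) (ball (0 : ℂ) 1))
  have hfF : EqOn (F ∘ fun z => h z - g z) f (ball 0 1) := fun z hz =>
    (shear_comp_invFunOn_sub hinj hz).trans (hf z).symm
  have hfD : f '' ball 0 1 = F '' (Ω₁ ∪ Ω₂) := by rw [← hΩ, ← image_comp, hfF.image_eq]
  have hFc : ContinuousOn F (Ω₁ ∪ Ω₂) :=
    hΩ ▸ continuousOn_shear_comp_invFunOn_sub hD hh hg hJ hinj
  have hFo : ∀ w ∈ Ω₁ ∪ Ω₂, map F (𝓝 w) = 𝓝 (F w) :=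
    hΩ ▸ forall_mem_image.2 fun _ hz => map_nhds_shear_comp_invFunOn_sub hD hh hg hJ hinj hz
  have hFinj : InjOn F (Ω₁ ∪ Ω₂) := injOn_of_Ly_image_subset hΩ₁x hΩ₂x hFc (shear_im _)
    (fun _ _ him hre hseg => re_shear_comp_invFunOn_sub_lt hD hh hg hJ hinj him hre (hΩ ▸ hseg))
    (by rw [← hfD, ← hLy, hΩ])
  refine ⟨(hFinj.comp hinj (hΩ ▸ mapsTo_image _ _)).congr hfF, F '' Ω₁, F '' Ω₂,
    isOpen_image_of_map_nhds_eq hΩ₁o fun w hw => hFo w (Or.inl hw),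
    hΩ₁c.image F (hFc.mono subset_union_left),
    hΩ₁x.image (hFc.mono subset_union_left) (shear_im _),
    isOpen_image_of_map_nhds_eq hΩ₂o fun w hw => hFo w (Or.inr hw),
    hΩ₂c.image F (hFc.mono subset_union_right),
    hΩ₂x.image (hFc.mono subset_union_right) (shear_im _),
    ⟨F w₀, mem_image_of_mem F hw₀.1, mem_image_of_mem F hw₀.2⟩, by rw [hfD, image_union]⟩
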